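/- arXiv:2306.07284 — 3 statements merged into one kernel-verified Lean document; each statement's English description precedes it below -/
import Mathlib

section
/- The quantity (y·√(2d) − (y·2d − Δ²·√(2d))/√(4Δ² + 2d)) · (1/√(4π d)) · exp(−½·((y·√(2d) − Δ²)/√(4Δ² + 2d))²) tends to 0 as d → ∞, and moreover d^{1/2} times this quantity converges to Δ²·e^{−y²/2}/(2√π). -/
/-!
Write `s = √(2d)` and `a = √(4Δ² + 2d)`. Rationalising `a - s = 4Δ²/(a + s)` turns `√d`
times the bound into `Δ² (1 + 4y/(a + s)) (s/a) / (2√π) · exp(-½ ((ys - Δ²)/a)²)`, and as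
`d → ∞` we have `a, s → ∞`, `s/a → 1` and `(ys - Δ²)/a → y`. Dividing by `√d → ∞` gives
the first limit.
-/

open Real Filter Topology

noncomputable def gapBound (y Δ d : ℝ) : ℝ :=
  (y * √(2 * d) - (y * (2 * d) - Δ ^ 2 * √(2 * d)) / √(4 * Δ ^ 2 + 2 * d)) *
    (1 / √(4 * π * d)) *
    exp (-(1 / 2) * ((y * √(2 * d) - Δ ^ 2) / √(4 * Δ ^ 2 + 2 * d)) ^ 2)

lemma tendsto_div_const_add_atTop (b : ℝ) :
    Tendsto (fun x : ℝ => x / (b + x)) atTop (𝓝 1) := by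
  have hden : Tendsto (fun x : ℝ => b + x) atTop atTop :=
    tendsto_atTop_add_const_left _ b tendsto_id
  have h := (tendsto_const_nhds (x := (1 : ℝ))).sub (tendsto_const_nhds (x := b).div_atTop hden)
  rw [sub_zero] at h
  refine h.congr' ?_
  filter_upwards [hden.eventually_gt_atTop 0] with x hx
  field_simp
  ring

lemma tendsto_sqrt_div_sqrt_const_add_atTop (b : ℝ) :
    Tendsto (fun x : ℝ => √x / √(b + x)) atTop (𝓝 1) := by
  have h := (tendsto_div_const_add_atTop b).sqrt
  rw [sqrt_one] at h
  refine h.congr' ?_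
  filter_upwards [eventually_ge_atTop 0] with x hx
  exact sqrt_div hx _

lemma gap_prefactor_eq {y Δ a s : ℝ} (ha : a ≠ 0) (has : a + s ≠ 0)
    (h : a ^ 2 = 4 * Δ ^ 2 + s ^ 2) :
    y * s - (y * s ^ 2 - Δ ^ 2 * s) / a = Δ ^ 2 * (1 + 4 * y / (a + s)) * (s / a) := by
  field_simp
  linear_combination (s * y) * h

lemma sqrt_mul_gapBound {y Δ d : ℝ} (hd : 0 < d) :
    √d * gapBound y Δ d =
      Δ ^ 2 * (1 + 4 * y / (√(4 * Δ ^ 2 + 2 * d) + √(2 * d))) *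
        (√(2 * d) / √(4 * Δ ^ 2 + 2 * d)) / (2 * √π) *
        exp (-(1 / 2) * ((y * √(2 * d) - Δ ^ 2) / √(4 * Δ ^ 2 + 2 * d)) ^ 2) := by
  have hs : √(2 * d) ^ 2 = 2 * d := sq_sqrt (by positivity)
  have ha : √(4 * Δ ^ 2 + 2 * d) ^ 2 = 4 * Δ ^ 2 + √(2 * d) ^ 2 := by
    rw [hs, sq_sqrt (by positivity)]
  have hsqrt : √(4 * π * d) = 2 * √π * √d := by
    rw [sqrt_mul (by positivity), sqrt_mul (by norm_num),
      show (4 : ℝ) = 2 ^ 2 by norm_num, sqrt_sq zero_le_two]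
  have hsd : √d ≠ 0 := (sqrt_pos.mpr hd).ne'
  have hpi : √π ≠ 0 := (sqrt_pos.mpr pi_pos).ne'
  have hnum := gap_prefactor_eq (y := y) (by positivity) (by positivity) ha
  rw [hs] at hnum
  rw [gapBound, hsqrt, hnum]
  field_simp

lemma tendsto_sqrt_mul_gapBound (y Δ : ℝ) :
    Tendsto (fun d => √d * gapBound y Δ d) atTop
      (𝓝 (Δ ^ 2 * exp (-y ^ 2 / 2) / (2 * √π))) := by
  have h2d : Tendsto (fun d : ℝ => 2 * d) atTop atTop := tendsto_id.const_mul_atTop two_pos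
  have ha : Tendsto (fun d : ℝ => √(4 * Δ ^ 2 + 2 * d)) atTop atTop :=
    tendsto_sqrt_atTop.comp (tendsto_atTop_add_const_left _ _ h2d)
  have hratio : Tendsto (fun d : ℝ => √(2 * d) / √(4 * Δ ^ 2 + 2 * d)) atTop (𝓝 1) :=
    (tendsto_sqrt_div_sqrt_const_add_atTop _).comp h2d
  have hcorr :
      Tendsto (fun d : ℝ => 4 * y / (√(4 * Δ ^ 2 + 2 * d) + √(2 * d))) atTop (𝓝 0) :=
    tendsto_const_nhds.div_atTop (ha.atTop_add_nonneg fun _ => sqrt_nonneg _)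
  have harg : Tendsto (fun d : ℝ => (y * √(2 * d) - Δ ^ 2) / √(4 * Δ ^ 2 + 2 * d)) atTop
      (𝓝 y) := by
    have h := (hratio.const_mul y).sub (tendsto_const_nhds (x := Δ ^ 2).div_atTop ha)
    rw [mul_one, sub_zero] at h
    refine h.congr fun d => ?_
    rw [sub_div, mul_div_assoc]
  have hprefactor :=
    (((tendsto_const_nhds (x := (1 : ℝ)).add hcorr).const_mul (Δ ^ 2)).mul hratio).div_const
      (2 * √π)
  have hlim := hprefactor.mul ((harg.pow 2).const_mul (-(1 / 2))).rexp
  rw [show Δ ^ 2 * exp (-y ^ 2 / 2) / (2 * √π) =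
    Δ ^ 2 * (1 + 0) * 1 / (2 * √π) * exp (-(1 / 2) * y ^ 2) by ring_nf]
  refine hlim.congr' ?_
  filter_upwards [eventually_gt_atTop 0] with d hd
  exact (sqrt_mul_gapBound hd).symm

/-- the gap bound
`(y√(2d) − (y·2d − Δ²√(2d))/√(4Δ²+2d)) · (1/√(4πd)) · exp(−½((y√(2d) − Δ²)/√(4Δ²+2d))²)`
tends to `0` as `d → ∞`, and `√d` times it converges to `Δ²·e^{−y²/2}/(2√π)`. -/
theorem stmt_7 (y Δ : ℝ) :
    Tendsto (fun d : ℝ =>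
        (y * Real.sqrt (2 * d) -
            (y * (2 * d) - Δ ^ 2 * Real.sqrt (2 * d)) / Real.sqrt (4 * Δ ^ 2 + 2 * d)) *
          (1 / Real.sqrt (4 * Real.pi * d)) *
          Real.exp (-(1 / 2) *
            ((y * Real.sqrt (2 * d) - Δ ^ 2) / Real.sqrt (4 * Δ ^ 2 + 2 * d)) ^ 2))
      atTop (nhds 0) ∧
    Tendsto (fun d : ℝ =>
        Real.sqrt d *
          ((y * Real.sqrt (2 * d) -
              (y * (2 * d) - Δ ^ 2 * Real.sqrt (2 * d)) / Real.sqrt (4 * Δ ^ 2 + 2 * d)) *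
            (1 / Real.sqrt (4 * Real.pi * d)) *
            Real.exp (-(1 / 2) *
              ((y * Real.sqrt (2 * d) - Δ ^ 2) / Real.sqrt (4 * Δ ^ 2 + 2 * d)) ^ 2)))
      atTop (nhds (Δ ^ 2 * Real.exp (-y ^ 2 / 2) / (2 * Real.sqrt Real.pi))) := by
  have hscaled := tendsto_sqrt_mul_gapBound y Δ
  refine ⟨?_, hscaled⟩
  have h := (tendsto_inv_atTop_zero.comp tendsto_sqrt_atTop).mul hscaled
  rw [zero_mul] at h
  refine h.congr' ?_
  filter_upwards [eventually_gt_atTop 0] with d hd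
  exact inv_mul_cancel_left₀ (sqrt_pos.mpr hd).ne' _
end

section
/- For fixed y, Δ ∈ ℝ, the limit as d → ∞ of √d · (y − (y√(2d) − Δ²)/√(4Δ² + 2d)) equals Δ²/√2. -/
open Real Filter

/-- lim_{d→∞} √d · (y − (y√(2d) − Δ²)/√(4Δ² + 2d)) = Δ²/√2. -/
theorem stmt_16 (y Δ : ℝ) :
    Tendsto (fun d : ℝ =>
        Real.sqrt d *
          (y - (y * Real.sqrt (2 * d) - Δ ^ 2) / Real.sqrt (4 * Δ ^ 2 + 2 * d)))
      atTop (nhds (Δ ^ 2 / Real.sqrt 2)) := by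
  -- g d = √(d/(4Δ²+2d)) * (Δ² + 4yΔ²/(√(4Δ²+2d)+√(2d)))
  have hsqrt : Tendsto Real.sqrt atTop atTop := by
    refine tendsto_atTop_atTop.2 fun b => ⟨max (b ^ 2) 0, fun a ha => ?_⟩
    calc b ≤ |b| := le_abs_self b
      _ = Real.sqrt (b ^ 2) := (Real.sqrt_sq_eq_abs b).symm
      _ ≤ Real.sqrt a := Real.sqrt_le_sqrt (le_trans (le_max_left _ _) ha)
  have h2d : Tendsto (fun d : ℝ => Real.sqrt (2 * d)) atTop atTop :=
    hsqrt.comp (tendsto_id.const_mul_atTop two_pos)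
  have hD : Tendsto (fun d : ℝ => Real.sqrt (4 * Δ ^ 2 + 2 * d) + Real.sqrt (2 * d))
      atTop atTop :=
    tendsto_atTop_mono (fun d => le_add_of_nonneg_left (Real.sqrt_nonneg _)) h2d
  have h1 : Tendsto (fun d : ℝ => Δ ^ 2 + 4 * y * Δ ^ 2 /
      (Real.sqrt (4 * Δ ^ 2 + 2 * d) + Real.sqrt (2 * d))) atTop (nhds (Δ ^ 2 + 0)) :=
    tendsto_const_nhds.add (Tendsto.div_atTop tendsto_const_nhds hD)
  have h2 : Tendsto (fun d : ℝ => d / (4 * Δ ^ 2 + 2 * d)) atTop (nhds (2 : ℝ)⁻¹) := by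
    have ha : Tendsto (fun d : ℝ => 4 * Δ ^ 2 / d + 2) atTop (nhds ((0 : ℝ) + 2)) :=
      (Tendsto.div_atTop tendsto_const_nhds tendsto_id).add tendsto_const_nhds
    have hb := ha.inv₀ (by norm_num)
    rw [zero_add] at hb
    refine hb.congr' ?_
    filter_upwards [eventually_gt_atTop (0 : ℝ)] with d hd
    rw [inv_eq_one_div, div_eq_div_iff (by positivity) (by positivity)]
    field_simp
  have h3 : Tendsto (fun d : ℝ => Real.sqrt (d / (4 * Δ ^ 2 + 2 * d))) atTop
      (nhds (Real.sqrt (2 : ℝ)⁻¹)) := (Real.continuous_sqrt.tendsto _).comp h2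
  have hmul := h3.mul h1
  have hval : Real.sqrt (2 : ℝ)⁻¹ * (Δ ^ 2 + 0) = Δ ^ 2 / Real.sqrt 2 := by
    rw [Real.sqrt_inv, add_zero]; ring
  rw [hval] at hmul
  refine hmul.congr' ?_
  filter_upwards [eventually_gt_atTop (0 : ℝ)] with d hd
  set s := Real.sqrt (4 * Δ ^ 2 + 2 * d) with hs
  set t := Real.sqrt (2 * d) with ht
  have hspos : 0 < s := Real.sqrt_pos.2 (by positivity)
  have htpos : 0 < t := Real.sqrt_pos.2 (by positivity)
  have hs2 : s ^ 2 = 4 * Δ ^ 2 + 2 * d := Real.sq_sqrt (by positivity)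
  have ht2 : t ^ 2 = 2 * d := Real.sq_sqrt (by positivity)
  have hdiv : Real.sqrt (d / (4 * Δ ^ 2 + 2 * d)) = Real.sqrt d / s := by
    rw [hs, Real.sqrt_div hd.le]
  rw [hdiv]
  have key : Δ ^ 2 + 4 * y * Δ ^ 2 / (s + t) = (y - (y * t - Δ ^ 2) / s) * s := by
    field_simp
    linear_combination y * ht2 - y * hs2
  rw [div_mul_eq_mul_div, key, mul_comm (y - (y * t - Δ ^ 2) / s) s,
    mul_div_assoc, mul_div_cancel_left₀ _ (ne_of_gt hspos)]
end

section
/- Let D = (1−π)·N(0,1) + π·N(Δ,1) be a one-dimensional Gaussian mixture with 0 < π < 1 and Δ ≠ 0. For the likelihood score s(x) = e^{−x²/2}/√(2π) with threshold t ∈ (0, 1/√(2π)), the true positive rate strictly exceeds the false positive rate: P(s(X) < t | X anomalous) > P(s(X) < t | X normal). -/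
open MeasureTheory ProbabilityTheory intervalIntegral NNReal

noncomputable def f0 : ℝ → ℝ := gaussianPDFReal 0 1

lemma f0_cont : Continuous f0 := by
  unfold f0 gaussianPDFReal
  fun_prop

lemma f0_even (x : ℝ) : f0 (-x) = f0 x := by
  unfold f0 gaussianPDFReal
  norm_num

lemma f0_lt {c y : ℝ} (hc : 0 < c) (hy : y < c) : f0 (y - 2*c) < f0 y := by
  unfold f0 gaussianPDFReal
  push_cast
  have h1 : (0:ℝ) < (Real.sqrt (2 * Real.pi * 1))⁻¹ := by positivity
  have h2 : Real.exp (-(y - 2*c - 0)^2 / (2*1)) < Real.exp (-(y - 0)^2 / (2*1)) := by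
    apply Real.exp_lt_exp.mpr
    nlinarith
  exact mul_lt_mul_of_pos_left h2 h1

lemma shift_lt {c Δ : ℝ} (hc : 0 < c) (hΔ : 0 < Δ) :
    ∫ x in (-c-Δ)..(c-Δ), f0 x < ∫ x in (-c)..c, f0 x := by
  have hii : ∀ a b : ℝ, IntervalIntegrable f0 volume a b :=
    fun a b => f0_cont.intervalIntegrable a b
  have h1 : (∫ x in (-c-Δ)..(c-Δ), f0 x) + ∫ x in (c-Δ)..c, f0 x
      = ∫ x in (-c-Δ)..c, f0 x := integral_add_adjacent_intervals (hii _ _) (hii _ _)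
  have h2 : (∫ x in (-c-Δ)..(-c), f0 x) + ∫ x in (-c)..c, f0 x
      = ∫ x in (-c-Δ)..c, f0 x := integral_add_adjacent_intervals (hii _ _) (hii _ _)
  have h3 : (∫ x in (-c-Δ)..(-c), f0 x) = ∫ y in (c-Δ)..c, f0 (y - 2*c) := by
    rw [intervalIntegral.integral_comp_sub_right f0 (2*c)]
    congr 1 <;> ring
  have hii2 : IntervalIntegrable (fun y => f0 (y - 2*c)) volume (c-Δ) c :=
    Continuous.intervalIntegrable (f0_cont.comp (continuous_sub_right (2*c))) _ _
  have hpos : 0 < ∫ y in (c-Δ)..c, (f0 y - f0 (y - 2*c)) := by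
    apply intervalIntegral.intervalIntegral_pos_of_pos_on
    · exact (hii _ _).sub hii2
    · intro y hy
      have := f0_lt hc hy.2
      linarith
    · linarith
  rw [intervalIntegral.integral_sub (hii _ _) hii2] at hpos
  linarith

lemma key {c Δ : ℝ} (hc : 0 < c) (hΔ : Δ ≠ 0) :
    ∫ x in (-c)..c, gaussianPDFReal Δ 1 x < ∫ x in (-c)..c, f0 x := by
  have hshift : (∫ x in (-c)..c, gaussianPDFReal Δ 1 x) = ∫ x in (-c-Δ)..(c-Δ), f0 x := by
    rw [← intervalIntegral.integral_comp_sub_right f0 Δ]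
    congr 1 with x
    unfold f0
    rw [gaussianPDFReal_sub, zero_add]
  rw [hshift]
  rcases hΔ.lt_or_gt with h | h
  · have h1 := intervalIntegral.integral_comp_neg (a := -c-(-Δ)) (b := c-(-Δ)) f0
    simp only [f0_even] at h1
    have h2 : (∫ x in (-c-Δ)..(c-Δ), f0 x) = ∫ x in (-c-(-Δ))..(c-(-Δ)), f0 x := by
      rw [h1]; congr 1 <;> ring
    rw [h2]
    exact shift_lt hc (by linarith)
  · exact shift_lt hc h

/-- for the one-dimensional likelihood score `s(x) = e^{−x²/2}/√(2π)` with
threshold `t ∈ (0, 1/√(2π))`, and a shifted anomalous distribution `N(Δ,1)` with `Δ ≠ 0`,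
the true positive rate strictly exceeds the false positive rate:
`P_{N(Δ,1)}(s(X) < t) > P_{N(0,1)}(s(X) < t)`. -/
theorem stmt_18 (Δ : ℝ) (hΔ : Δ ≠ 0) (t : ℝ) (ht0 : 0 < t)
    (ht1 : t < 1 / Real.sqrt (2 * Real.pi)) :
    (gaussianReal Δ 1) {x : ℝ | Real.exp (-x ^ 2 / 2) / Real.sqrt (2 * Real.pi) < t} >
      (gaussianReal 0 1) {x : ℝ | Real.exp (-x ^ 2 / 2) / Real.sqrt (2 * Real.pi) < t} := by
  have hK : (0:ℝ) < Real.sqrt (2 * Real.pi) := Real.sqrt_pos.mpr (by positivity)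
  set K := Real.sqrt (2 * Real.pi) with hKdef
  have htK : 0 < t * K := by positivity
  have htK1 : t * K < 1 := by
    rw [div_eq_mul_inv, one_mul] at ht1
    calc t * K < K⁻¹ * K := by exact mul_lt_mul_of_pos_right ht1 hK
    _ = 1 := inv_mul_cancel₀ hK.ne'
  have hL : 0 < -2 * Real.log (t * K) := by
    have := Real.log_neg htK htK1
    linarith
  set c := Real.sqrt (-2 * Real.log (t * K)) with hcdef
  have hc : 0 < c := Real.sqrt_pos.mpr hL
  have hc2 : c ^ 2 = -2 * Real.log (t * K) := Real.sq_sqrt hL.le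
  have hset : {x : ℝ | Real.exp (-x ^ 2 / 2) / K < t} = {x : ℝ | c < |x|} := by
    ext x
    simp only [Set.mem_setOf_eq]
    rw [div_lt_iff₀ hK, ← Real.lt_log_iff_exp_lt htK]
    constructor
    · intro h
      nlinarith [sq_abs x, abs_nonneg x]
    · intro h
      nlinarith [sq_abs x, abs_nonneg x]
  rw [hset]
  have hmeas : MeasurableSet {x : ℝ | c < |x|} := by
    apply measurableSet_lt measurable_const
    measurability
  have hcompl : {x : ℝ | c < |x|}ᶜ = Set.Icc (-c) c := by
    ext x
    simp [Set.mem_Icc, not_lt, abs_le]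
  rw [gaussianReal_apply_eq_integral _ (one_ne_zero) _,
    gaussianReal_apply_eq_integral _ (one_ne_zero) _]
  have hint0 : ∀ μ : ℝ, ∫ x in {x : ℝ | c < |x|}, gaussianPDFReal μ 1 x
      = 1 - ∫ x in (-c)..c, gaussianPDFReal μ 1 x := by
    intro μ
    have h1 : (∫ x in {x : ℝ | c < |x|}, gaussianPDFReal μ 1 x)
        + ∫ x in {x : ℝ | c < |x|}ᶜ, gaussianPDFReal μ 1 x = ∫ x, gaussianPDFReal μ 1 x :=
      integral_add_compl hmeas (integrable_gaussianPDFReal μ 1)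
    rw [integral_gaussianPDFReal_eq_one μ one_ne_zero, hcompl] at h1
    rw [intervalIntegral.integral_of_le (by linarith : -c ≤ c),
      ← MeasureTheory.integral_Icc_eq_integral_Ioc]
    linarith
  rw [hint0, hint0]
  have hlt : (∫ x in (-c)..c, gaussianPDFReal Δ 1 x) < ∫ x in (-c)..c, gaussianPDFReal 0 1 x :=
    key hc hΔ
  have hnn : 0 ≤ ∫ x in {x : ℝ | c < |x|}, gaussianPDFReal 0 1 x :=
    setIntegral_nonneg hmeas (fun x _ => gaussianPDFReal_nonneg 0 1 x)
  rw [hint0 0] at hnn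
  exact (ENNReal.ofReal_lt_ofReal_iff_of_nonneg hnn).mpr (by linarith)
end
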